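/- Unimodal evolution solutions: let Ω = (0, π) × (−ℓ, ℓ) with ℓ > 0, let k > 0, S > 0, P, α ∈ ℝ, let m be a positive integer, let ψ : ℝ → ℝ be four times continuously differentiable, set U(x, y) := ψ(y) sin(mx) and Q := ∫_Ω U_x². Suppose U satisfies the stationary equation Δ²U + (P − S·Q) U_xx = α U_y at every point of Ω, and φ : ℝ → ℝ is twice differentiable with φ″(t) + kφ′(t) + S m² Q (φ(t)³ − φ(t)) = 0 for all t ≥ 0. Then W(x, y, t) := φ(t) U(x, y) satisfies, for all t ≥ 0, the identity ∫_Ω W_x(·, ·, t)² = φ(t)² Q and, at every point of Ω, the evolution equation W_tt + k W_t + Δ²W + (P − S ∫_Ω W_x(·, ·, t)²) W_xx = α W_y. -/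

import Mathlib

open MeasureTheory

/-- The rectangular plate `Ω = (0, π) × (−ℓ, ℓ)`. -/
noncomputable def plateDomain (ℓ : ℝ) : Set (ℝ × ℝ) :=
  Set.Ioo 0 Real.pi ×ˢ Set.Ioo (-ℓ) ℓ

/-- The pointwise partial derivative in the first (`x`) variable. -/
noncomputable def pderivX (U : ℝ × ℝ → ℝ) : ℝ × ℝ → ℝ :=
  fun p => deriv (fun x => U (x, p.2)) p.1

/-- The pointwise partial derivative in the second (`y`) variable. -/
noncomputable def pderivY (U : ℝ × ℝ → ℝ) : ℝ × ℝ → ℝ :=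
  fun p => deriv (fun y => U (p.1, y)) p.2

/-- The biharmonic operator `Δ²U = U_xxxx + 2 U_xxyy + U_yyyy`, computed pointwise. -/
noncomputable def biharm (U : ℝ × ℝ → ℝ) : ℝ × ℝ → ℝ :=
  fun p => pderivX (pderivX (pderivX (pderivX U))) p
    + 2 * pderivY (pderivY (pderivX (pderivX U))) p
    + pderivY (pderivY (pderivY (pderivY U))) p

/-!
Every spatial operator in the evolution equation is linear, so on `W = φ(t) U` it just picks up
the factor `φ(t)`, while the nonlocal coefficient becomes `P − S φ² Q`. Subtracting `φ(t)` times the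
stationary equation leaves `(φ″ + kφ′) U + S Q (φ − φ³) U_xx`, and since `U_xx = −m² U` this is
`U` times the left-hand side of the Duffing equation.
-/

lemma pderivX_const_mul (c : ℝ) (V : ℝ × ℝ → ℝ) :
    pderivX (fun q => c * V q) = fun p => c * pderivX V p :=
  funext fun _ => deriv_const_mul_field c

lemma pderivY_const_mul (c : ℝ) (V : ℝ × ℝ → ℝ) :
    pderivY (fun q => c * V q) = fun p => c * pderivY V p :=
  funext fun _ => deriv_const_mul_field c

lemma biharm_const_mul (c : ℝ) (V : ℝ × ℝ → ℝ) (p : ℝ × ℝ) :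
    biharm (fun q => c * V q) p = c * biharm V p := by
  simp only [biharm, pderivX_const_mul, pderivY_const_mul]
  ring

lemma integral_sq_pderivX_const_mul (μ : Measure (ℝ × ℝ)) (c : ℝ) (V : ℝ × ℝ → ℝ) :
    ∫ p, (pderivX (fun q => c * V q) p) ^ 2 ∂μ = c ^ 2 * ∫ p, (pderivX V p) ^ 2 ∂μ := by
  simp only [pderivX_const_mul, mul_pow, integral_const_mul]

lemma pderivX_mul_sin (ψ : ℝ → ℝ) (m : ℝ) :
    pderivX (fun p => ψ p.2 * Real.sin (m * p.1)) = fun p => ψ p.2 * (m * Real.cos (m * p.1)) :=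
  funext fun p => (((hasDerivAt_id p.1).const_mul m).sin.const_mul (ψ p.2)).deriv.trans
    (by simp only [id, mul_one, mul_comm])

lemma pderivX_pderivX_mul_sin (ψ : ℝ → ℝ) (m : ℝ) (p : ℝ × ℝ) :
    pderivX (pderivX (fun p => ψ p.2 * Real.sin (m * p.1))) p
      = -m ^ 2 * (ψ p.2 * Real.sin (m * p.1)) := by
  rw [pderivX_mul_sin]
  refine ((((hasDerivAt_id p.1).const_mul m).cos.const_mul m).const_mul (ψ p.2)).deriv.trans ?_
  simp only [id]
  ring

lemma deriv_deriv_mul_const (φ : ℝ → ℝ) (c t : ℝ) :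
    deriv (deriv fun s => φ s * c) t = deriv (deriv φ) t * c := by
  rw [deriv_mul_const_field', deriv_mul_const_field]

theorem unimodal_evolution_solutions_general (ℓ k S P α : ℝ) (m : ℕ) (ψ : ℝ → ℝ)
    (U : ℝ × ℝ → ℝ) (hU : U = fun p => ψ p.2 * Real.sin (m * p.1))
    (Q : ℝ) (hQdef : Q = ∫ p in plateDomain ℓ, (pderivX U p) ^ 2)
    (hstat : ∀ p ∈ plateDomain ℓ,
      biharm U p + (P - S * Q) * pderivX (pderivX U) p = α * pderivY U p)
    (φ : ℝ → ℝ)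
    (hduffing : ∀ t : ℝ, 0 ≤ t →
      deriv (deriv φ) t + k * deriv φ t
        + S * (m : ℝ) ^ 2 * Q * ((φ t) ^ 3 - φ t) = 0) :
    ∀ t : ℝ, 0 ≤ t →
      ((∫ p in plateDomain ℓ, (pderivX (fun q => φ t * U q) p) ^ 2) = (φ t) ^ 2 * Q) ∧
      ∀ p ∈ plateDomain ℓ,
        deriv (deriv (fun s => φ s * U p)) t
          + k * deriv (fun s => φ s * U p) t
          + biharm (fun q => φ t * U q) p
          + (P - S * ∫ q in plateDomain ℓ, (pderivX (fun q' => φ t * U q') q) ^ 2)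
              * pderivX (pderivX (fun q => φ t * U q)) p
          = α * pderivY (fun q => φ t * U q) p := by
  intro t ht
  have energy : ∫ p in plateDomain ℓ, (pderivX (fun q => φ t * U q) p) ^ 2 = (φ t) ^ 2 * Q := by
    rw [integral_sq_pderivX_const_mul, hQdef]
  refine ⟨energy, fun p hp => ?_⟩
  have hxx : pderivX (pderivX U) p = -(m : ℝ) ^ 2 * U p := by
    subst hU
    exact pderivX_pderivX_mul_sin ψ m p
  rw [deriv_deriv_mul_const, deriv_mul_const_field, energy, biharm_const_mul,
    pderivX_const_mul, pderivX_const_mul, pderivY_const_mul]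
  linear_combination U p * hduffing t ht + φ t * hstat p hp
    + S * Q * φ t * (1 - (φ t) ^ 2) * hxx

/-- Unimodal evolution solutions: if `U(x,y) = ψ(y) sin(mx)` (with `ψ` of class `C⁴`)
solves the stationary equation `Δ²U + (P − S Q) U_xx = α U_y` on `Ω`, where
`Q = ∫_Ω U_x²`, and `φ` solves the damped Duffing equation
`φ″ + kφ′ + S m² Q (φ³ − φ) = 0` for `t ≥ 0`, then `W(x,y,t) = φ(t) U(x,y)` satisfies,
for all `t ≥ 0`, `∫_Ω W_x(·,·,t)² = φ(t)² Q` and, at every point of `Ω`, the evolution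
equation `W_tt + k W_t + Δ²W + (P − S ∫_Ω W_x(·,·,t)²) W_xx = α W_y`. -/
theorem unimodal_evolution_solutions (ℓ k S P α : ℝ) (hℓ : 0 < ℓ) (hk : 0 < k)
    (hS : 0 < S) (m : ℕ) (hm : 0 < m) (ψ : ℝ → ℝ) (hψ : ContDiff ℝ 4 ψ)
    (U : ℝ × ℝ → ℝ) (hU : U = fun p => ψ p.2 * Real.sin (m * p.1))
    (Q : ℝ) (hQdef : Q = ∫ p in plateDomain ℓ, (pderivX U p) ^ 2)
    (hstat : ∀ p ∈ plateDomain ℓ,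
      biharm U p + (P - S * Q) * pderivX (pderivX U) p = α * pderivY U p)
    (φ : ℝ → ℝ) (hφ : Differentiable ℝ φ) (hφ' : Differentiable ℝ (deriv φ))
    (hduffing : ∀ t : ℝ, 0 ≤ t →
      deriv (deriv φ) t + k * deriv φ t
        + S * (m : ℝ) ^ 2 * Q * ((φ t) ^ 3 - φ t) = 0) :
    ∀ t : ℝ, 0 ≤ t →
      ((∫ p in plateDomain ℓ, (pderivX (fun q => φ t * U q) p) ^ 2) = (φ t) ^ 2 * Q) ∧
      ∀ p ∈ plateDomain ℓ,
        deriv (deriv (fun s => φ s * U p)) t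
          + k * deriv (fun s => φ s * U p) t
          + biharm (fun q => φ t * U q) p
          + (P - S * ∫ q in plateDomain ℓ, (pderivX (fun q' => φ t * U q') q) ^ 2)
              * pderivX (pderivX (fun q => φ t * U q)) p
          = α * pderivY (fun q => φ t * U q) p :=
  unimodal_evolution_solutions_general ℓ k S P α m ψ U hU Q hQdef hstat φ hduffing
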